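/- For every integer k ≥ 0: (i) |∂₁ψ(x,y)| ≤ (1 + h/λ)·(h/λ)^k for every x ∈ [0,π] and every y ∈ [y_k, y_{k+1}), where ∂₁ψ is the partial derivative of ψ in the first variable; (ii) for every x ∈ [0,π] and every y ∈ (y_k, y_{k+1}), the partial derivative ∂₂ψ(x,y) of ψ in the second variable exists and satisfies |∂₂ψ(x,y)| ≤ (4/a)·(h/a)^k. -/

import Mathlib

open Real MeasureTheory Set Filter

noncomputable section

namespace StokesCounterexample

/-- `ySeq a k = Σ_{j=1}^k a^j` (so `ySeq a 0 = 0`). -/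
def ySeq (a : ℝ) (k : ℕ) : ℝ := ∑ j ∈ Finset.range k, a ^ (j + 1)

/-- `yInf a = Σ_{j=1}^∞ a^j = a / (1 - a)`. -/
def yInf (a : ℝ) : ℝ := a / (1 - a)

/-- `fSeq h l 0 = 0` and `fSeq h l k x = h^k · sin (x / l^k)` for `k ≥ 1`. -/
def fSeq (h l : ℝ) (k : ℕ) (x : ℝ) : ℝ :=
  if k = 0 then 0 else h ^ k * Real.sin (x / l ^ k)

open Classical in
/-- The interpolation `ψ(x,y) = (1 - φ_k(y))·f_k(x) + φ_k(y)·f_{k+1}(x)` for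
`y ∈ [y_k, y_{k+1})`, where `φ_k(y) = φ((y - y_k)/a^(k+1))`, extended by `0`
outside of `⋃_k [y_k, y_{k+1})` (in particular `ψ(x, y_∞) = 0`). -/
def psi (a h l : ℝ) (φ : ℝ → ℝ) (x y : ℝ) : ℝ :=
  if hk : ∃ k : ℕ, ySeq a k ≤ y ∧ y < ySeq a (k + 1) then
    (1 - φ ((y - ySeq a hk.choose) / a ^ (hk.choose + 1))) * fSeq h l hk.choose x
      + φ ((y - ySeq a hk.choose) / a ^ (hk.choose + 1)) * fSeq h l (hk.choose + 1) x
  else 0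

/-- The partial derivative of `ψ` in the first variable. -/
def psi₁ (a h l : ℝ) (φ : ℝ → ℝ) (x y : ℝ) : ℝ :=
  deriv (fun t => psi a h l φ t y) x

/-- The partial derivative of `ψ` in the second variable. -/
def psi₂ (a h l : ℝ) (φ : ℝ → ℝ) (x y : ℝ) : ℝ :=
  deriv (fun s => psi a h l φ x s) y

/-- The arc length `L(x,y) = ∫_0^x √(1 + (∂₁ψ(t,y))²) dt`. -/
def arc (a h l : ℝ) (φ : ℝ → ℝ) (x y : ℝ) : ℝ :=
  ∫ t in (0:ℝ)..x, Real.sqrt (1 + psi₁ a h l φ t y ^ 2)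

/-- The length `L(y) = L(π, y)` of the section of the graph of `ψ` at height `y`. -/
def len (a h l : ℝ) (φ : ℝ → ℝ) (y : ℝ) : ℝ := arc a h l φ π y

/-!
On the strip `y_k ≤ y < y_{k+1}` the function `ψ` is the convex combination
`(1 - φ_k(y)) f_k(x) + φ_k(y) f_{k+1}(x)`. Hence `∂₁ψ` is the same combination of `f_k'` and
`f_{k+1}'`, which are bounded by `(h/λ)^k` and `(h/λ)^{k+1}`, while in the interior of the strip
`∂₂ψ = φ'((y - y_k)/a^{k+1}) · a^{-(k+1)} · (f_{k+1}(x) - f_k(x))`, bounded by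
`2 · a^{-(k+1)} · 2h^k`.
-/

theorem eq_of_mem_Ico_of_mem_Ico {α : Type*} [Preorder α] {u : ℕ → α} (hu : Monotone u)
    {y : α} {j k : ℕ} (hj : y ∈ Ico (u j) (u (j + 1))) (hk : y ∈ Ico (u k) (u (k + 1))) :
    j = k := by
  have key : ∀ {m n : ℕ}, y ∈ Ico (u m) (u (m + 1)) → y ∈ Ico (u n) (u (n + 1)) → m ≤ n :=
    fun hm hn => not_lt.1 fun hlt => (hn.2.trans_le (hu hlt)).not_ge hm.1
  exact le_antisymm (key hj hk) (key hk hj)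

theorem ySeq_succ (a : ℝ) (k : ℕ) : ySeq a (k + 1) = ySeq a k + a ^ (k + 1) :=
  Finset.sum_range_succ _ _

theorem ySeq_strictMono {a : ℝ} (ha : 0 < a) : StrictMono (ySeq a) :=
  strictMono_nat_of_lt_succ fun k => by
    rw [ySeq_succ]
    exact lt_add_of_pos_right _ (pow_pos ha _)

theorem psi_eq_of_mem_Ico {a : ℝ} (ha : 0 < a) (h l : ℝ) (φ : ℝ → ℝ) (x : ℝ) {k : ℕ} {y : ℝ}
    (hy : y ∈ Ico (ySeq a k) (ySeq a (k + 1))) :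
    psi a h l φ x y = (1 - φ ((y - ySeq a k) / a ^ (k + 1))) * fSeq h l k x
      + φ ((y - ySeq a k) / a ^ (k + 1)) * fSeq h l (k + 1) x := by
  have hex : ∃ j : ℕ, ySeq a j ≤ y ∧ y < ySeq a (j + 1) := ⟨k, hy⟩
  rw [psi, dif_pos hex, eq_of_mem_Ico_of_mem_Ico (ySeq_strictMono ha).monotone hex.choose_spec hy]

theorem fSeq_zero (h l : ℝ) : fSeq h l 0 = 0 :=
  funext fun _ => if_pos rfl

theorem hasDerivAt_fSeq (h l : ℝ) {k : ℕ} (hk : k ≠ 0) (x : ℝ) :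
    HasDerivAt (fSeq h l k) (h ^ k / l ^ k * Real.cos (x / l ^ k)) x := by
  have hf : fSeq h l k = fun t => h ^ k * Real.sin (t / l ^ k) := funext fun _ => if_neg hk
  rw [hf]
  exact (((Real.hasDerivAt_sin _).comp x ((hasDerivAt_id' x).div_const _)).const_mul _).congr_deriv
    (by ring)

theorem differentiable_fSeq (h l : ℝ) (k : ℕ) : Differentiable ℝ (fSeq h l k) := by
  rcases eq_or_ne k 0 with rfl | hk
  · rw [fSeq_zero]
    exact differentiable_const 0
  · exact fun x => (hasDerivAt_fSeq h l hk x).differentiableAt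

theorem abs_fSeq_le {h : ℝ} (hh : 0 ≤ h) (l : ℝ) (k : ℕ) (x : ℝ) : |fSeq h l k x| ≤ h ^ k := by
  rcases eq_or_ne k 0 with rfl | hk
  · simp [fSeq_zero]
  · rw [fSeq, if_neg hk, abs_mul, abs_of_nonneg (pow_nonneg hh k)]
    exact mul_le_of_le_one_right (pow_nonneg hh k) (Real.abs_sin_le_one _)

theorem abs_deriv_fSeq_le {h l : ℝ} (hh : 0 ≤ h) (hl : 0 < l) (k : ℕ) (x : ℝ) :
    |deriv (fSeq h l k) x| ≤ (h / l) ^ k := by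
  rcases eq_or_ne k 0 with rfl | hk
  · simp [fSeq_zero]
  · rw [(hasDerivAt_fSeq h l hk x).deriv, abs_mul, ← div_pow, abs_of_nonneg (by positivity)]
    exact mul_le_of_le_one_right (by positivity) (Real.abs_cos_le_one _)

theorem abs_fSeq_succ_sub_le {h : ℝ} (hh₀ : 0 ≤ h) (hh₁ : h ≤ 1) (l : ℝ) (k : ℕ) (x : ℝ) :
    |fSeq h l (k + 1) x - fSeq h l k x| ≤ 2 * h ^ k := by
  have hpow : h ^ (k + 1) ≤ h ^ k := pow_le_pow_of_le_one hh₀ hh₁ k.le_succ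
  calc |fSeq h l (k + 1) x - fSeq h l k x| ≤ |fSeq h l (k + 1) x| + |fSeq h l k x| := abs_sub _ _
    _ ≤ 2 * h ^ k := by linarith [abs_fSeq_le hh₀ l (k + 1) x, abs_fSeq_le hh₀ l k x]

theorem abs_interp_le {c : ℝ} (hc : c ∈ Icc (0 : ℝ) 1) (u v : ℝ) :
    |(1 - c) * u + c * v| ≤ |u| + |v| := by
  calc |(1 - c) * u + c * v| ≤ (1 - c) * |u| + c * |v| := by
        refine (abs_add_le _ _).trans_eq ?_
        rw [abs_mul, abs_mul, abs_of_nonneg (sub_nonneg.2 hc.2), abs_of_nonneg hc.1]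
    _ ≤ |u| + |v| :=
        add_le_add (mul_le_of_le_one_left (abs_nonneg u) (by linarith [hc.1]))
          (mul_le_of_le_one_left (abs_nonneg v) hc.2)

theorem hasDerivAt_interp {g : ℝ → ℝ} {g' y : ℝ} (hg : HasDerivAt g g' y) (p q : ℝ) :
    HasDerivAt (fun s => (1 - g s) * p + g s * q) (g' * (q - p)) y :=
  ((((hasDerivAt_const y 1).sub hg).mul_const p).add (hg.mul_const q)).congr_deriv (by ring)

theorem hasDerivAt_comp_sub_div {φ : ℝ → ℝ} (hφ : Differentiable ℝ φ) (b r y : ℝ) :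
    HasDerivAt (fun s => φ ((s - b) / r)) (deriv φ ((y - b) / r) / r) y :=
  ((hφ _).hasDerivAt.comp y (((hasDerivAt_id' y).sub_const b).div_const r)).congr_deriv (by ring)

theorem hasDerivAt_psi_fst {a : ℝ} (ha : 0 < a) (h l : ℝ) (φ : ℝ → ℝ) {k : ℕ} {y : ℝ}
    (hy : y ∈ Ico (ySeq a k) (ySeq a (k + 1))) (x : ℝ) :
    HasDerivAt (fun t => psi a h l φ t y)
      ((1 - φ ((y - ySeq a k) / a ^ (k + 1))) * deriv (fSeq h l k) x
        + φ ((y - ySeq a k) / a ^ (k + 1)) * deriv (fSeq h l (k + 1)) x) x := by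
  simp only [psi_eq_of_mem_Ico ha h l φ _ hy]
  exact ((differentiable_fSeq h l k x).hasDerivAt.const_mul _).add
    ((differentiable_fSeq h l (k + 1) x).hasDerivAt.const_mul _)

theorem hasDerivAt_psi_snd {a : ℝ} (ha : 0 < a) (h l : ℝ) {φ : ℝ → ℝ} (hφ : Differentiable ℝ φ)
    (x : ℝ) {k : ℕ} {y : ℝ} (hy : y ∈ Ioo (ySeq a k) (ySeq a (k + 1))) :
    HasDerivAt (fun s => psi a h l φ x s)
      (deriv φ ((y - ySeq a k) / a ^ (k + 1)) / a ^ (k + 1)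
        * (fSeq h l (k + 1) x - fSeq h l k x)) y := by
  have hψ : (fun s => psi a h l φ x s) =ᶠ[nhds y] fun s =>
      (1 - φ ((s - ySeq a k) / a ^ (k + 1))) * fSeq h l k x
        + φ ((s - ySeq a k) / a ^ (k + 1)) * fSeq h l (k + 1) x :=
    eventually_of_mem (Ioo_mem_nhds hy.1 hy.2) fun s hs =>
      psi_eq_of_mem_Ico ha h l φ x (Ioo_subset_Ico_self hs)
  exact (hasDerivAt_interp (hasDerivAt_comp_sub_div hφ _ _ y) _ _).congr_of_eventuallyEq hψ

theorem psi_derivative_bounds_general (a h l : ℝ) (ha0 : 0 < a) (hh0 : 0 < h) (hh1 : h < 1)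
    (hl0 : 0 < l)
    (φ : ℝ → ℝ) (hφsmooth : ContDiff ℝ (⊤ : ℕ∞) φ)
    (hφ01 : ∀ t, φ t ∈ Set.Icc (0:ℝ) 1)
    (hφd0 : ∀ t, 0 ≤ deriv φ t) (hφd2 : ∀ t, deriv φ t ≤ 2)
    (k : ℕ) :
    (∀ x ∈ Icc (0:ℝ) π, ∀ y : ℝ, ySeq a k ≤ y → y < ySeq a (k + 1) →
      DifferentiableAt ℝ (fun t => psi a h l φ t y) x ∧
      |psi₁ a h l φ x y| ≤ (1 + h / l) * (h / l) ^ k) ∧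
    (∀ x ∈ Icc (0:ℝ) π, ∀ y : ℝ, ySeq a k < y → y < ySeq a (k + 1) →
      ∃ d : ℝ, HasDerivAt (fun s => psi a h l φ x s) d y ∧ |d| ≤ 4 / a * (h / a) ^ k) := by
  refine ⟨fun x _ y hy₁ hy₂ => ?_, fun x _ y hy₁ hy₂ => ?_⟩
  · have hd := hasDerivAt_psi_fst ha0 h l φ ⟨hy₁, hy₂⟩ x
    refine ⟨hd.differentiableAt, ?_⟩
    rw [psi₁, hd.deriv]
    calc _ ≤ |deriv (fSeq h l k) x| + |deriv (fSeq h l (k + 1)) x| := abs_interp_le (hφ01 _) _ _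
      _ ≤ (h / l) ^ k + (h / l) ^ (k + 1) :=
        add_le_add (abs_deriv_fSeq_le hh0.le hl0 k x) (abs_deriv_fSeq_le hh0.le hl0 (k + 1) x)
      _ = (1 + h / l) * (h / l) ^ k := by ring
  · refine ⟨_, hasDerivAt_psi_snd ha0 h l (hφsmooth.differentiable (by simp)) x ⟨hy₁, hy₂⟩, ?_⟩
    set t := (y - ySeq a k) / a ^ (k + 1)
    calc |deriv φ t / a ^ (k + 1) * (fSeq h l (k + 1) x - fSeq h l k x)|
        = |deriv φ t| / a ^ (k + 1) * |fSeq h l (k + 1) x - fSeq h l k x| := by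
          rw [abs_mul, abs_div, abs_of_pos (pow_pos ha0 _)]
      _ ≤ 2 / a ^ (k + 1) * (2 * h ^ k) := by
          gcongr
          · exact abs_le.2 ⟨by linarith [hφd0 t], hφd2 t⟩
          · exact abs_fSeq_succ_sub_le hh0.le hh1.le l k x
      _ = 4 / a * (h / a) ^ k := by
          rw [div_pow, pow_succ]
          field_simp
          ring

/-- Bounds on the partial derivatives of `ψ` on the strip `[y_k, y_{k+1})`:
`|∂₁ψ| ≤ (1 + h/λ)(h/λ)^k`, and on the open strip `∂₂ψ` exists with
`|∂₂ψ| ≤ (4/a)(h/a)^k`. -/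
theorem psi_derivative_bounds (a h l : ℝ) (ha0 : 0 < a) (ha1 : a < 1) (hh0 : 0 < h) (hh1 : h < 1)
    (hl0 : 0 < l) (hl1 : l < 1) (hlN : ∃ N : ℕ, 0 < N ∧ l = 1 / N)
    (φ : ℝ → ℝ) (hφsmooth : ContDiff ℝ (⊤ : ℕ∞) φ) (hφmono : Monotone φ)
    (hφ01 : ∀ t, φ t ∈ Set.Icc (0:ℝ) 1)
    (hφd0 : ∀ t, 0 ≤ deriv φ t) (hφd2 : ∀ t, deriv φ t ≤ 2)
    (hφ0 : ∃ ε > 0, ∀ t < ε, φ t = 0) (hφ1 : ∃ ε > 0, ∀ t > 1 - ε, φ t = 1)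
    (k : ℕ) :
    (∀ x ∈ Icc (0:ℝ) π, ∀ y : ℝ, ySeq a k ≤ y → y < ySeq a (k + 1) →
      DifferentiableAt ℝ (fun t => psi a h l φ t y) x ∧
      |psi₁ a h l φ x y| ≤ (1 + h / l) * (h / l) ^ k) ∧
    (∀ x ∈ Icc (0:ℝ) π, ∀ y : ℝ, ySeq a k < y → y < ySeq a (k + 1) →
      ∃ d : ℝ, HasDerivAt (fun s => psi a h l φ x s) d y ∧ |d| ≤ 4 / a * (h / a) ^ k) :=
  psi_derivative_bounds_general a h l ha0 hh0 hh1 hl0 φ hφsmooth hφ01 hφd0 hφd2 k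

end StokesCounterexample
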